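/- Let p be a positive integer and let f be analytic on D with power series f(z)=z^p + a_{p+1}z^{p+1} + ⋯ . Suppose f'(z)≠0 for all z∈D with z≠0 and Re(1 + z f''(z)/f'(z)) > 0 for all z∈D. Then there exists a starlike univalent function f0 on D such that f(z) = f0(z)^p for all z∈D. -/

import Mathlib

open Complex Set MeasureTheory

noncomputable section

/-- The open unit disk in the complex plane. -/
def unitDisk : Set ℂ := {z : ℂ | ‖z‖ < 1}

/-- Integral of `g` along the segment from `0` to `z0`:
`∫_0^{z0} g(ξ) dξ = ∫_0^1 z0 · g(t z0) dt`. -/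
def segInt (g : ℂ → ℂ) (z0 : ℂ) : ℂ :=
  ∫ t in (0:ℝ)..1, z0 * g ((t : ℂ) * z0)

/-- The branch of `log f'` vanishing at the origin, evaluated at `z0`:
`log f'(z0) = ∫_0^{z0} f''(ξ)/f'(ξ) dξ`. -/
def logDerivAt (f : ℂ → ℂ) (z0 : ℂ) : ℂ :=
  segInt (fun ξ => deriv (deriv f) ξ / deriv f ξ) z0

/-- The class `F(λ,β)`: analytic `f` on the unit disk with `f(0)=0`, `f'(0)=1`,
`f''(0)=2λ(1-β)`, nonvanishing derivative, and `Re(1 + z f''(z)/f'(z)) > β`. -/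
def IsInF (lam beta : ℝ) (f : ℂ → ℂ) : Prop :=
  DifferentiableOn ℂ f unitDisk ∧ f 0 = 0 ∧ deriv f 0 = 1 ∧
    deriv (deriv f) 0 = 2 * (lam : ℂ) * (1 - (beta : ℂ)) ∧
    (∀ z ∈ unitDisk, deriv f z ≠ 0) ∧
    (∀ z ∈ unitDisk, beta < (1 + z * deriv (deriv f) z / deriv f z).re)

/-- The region of variability `V(z0,λ,β) = {log f'(z0) : f ∈ F(λ,β)}`. -/
def V (z0 : ℂ) (lam beta : ℝ) : Set ℂ :=
  {w : ℂ | ∃ f : ℂ → ℂ, IsInF lam beta f ∧ logDerivAt f z0 = w}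

/-- A starlike univalent function on the unit disk, normalized by
`g(0) = 0` and `g'(0) = 1`. -/
def IsStarlikeUnivalent (g : ℂ → ℂ) : Prop :=
  DifferentiableOn ℂ g unitDisk ∧ Set.InjOn g unitDisk ∧ g 0 = 0 ∧ deriv g 0 = 1 ∧
    ∀ z ∈ unitDisk, z ≠ 0 → 0 < (z * deriv g z / g z).re


/-!
Write `f = z^p g` with `g 0 = 1` and put `ψ = p g / (p g + z g')`. Since `z f' = z^p (p g + z g')`
and `f'` has no zeros off the origin, `ψ` is holomorphic on the disc, `ψ 0 = 1`, and away from `0`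
we have `ψ = p f / (z f')`, hence `ψ (1 + z f''/f') = p - z ψ'`. If `Re ψ` took a nonpositive
value, at a point `z₀` of least modulus with `Re ψ z₀ ≤ 0` we would get `Re ψ z₀ = 0` and, as `z₀`
minimises `Re ψ` on the disc `|z| ≤ |z₀|`, that `z₀ ψ'(z₀)` is real and `≤ 0` (Jack's lemma).
Then `p - z₀ ψ'(z₀)` is real and positive while `ψ z₀` is purely imaginary, so
`1 + z₀ f''/f'` would be purely imaginary. Hence `Re ψ > 0`; in particular `g` has no zeros and
a logarithm `L`, and `f₀ = z exp (L / p)` satisfies `f₀^p = f` and `z f₀'/f₀ = 1/ψ`.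
For univalence, in the coordinate `z = exp u` the map `f₀` becomes `exp` of `u ↦ u + L(exp u)/p`,
whose derivative has positive real part on the convex half-plane `Re u < 0`, so it is injective
there (Noshiro–Warschawski).
-/
open Metric Topology

theorem unitDisk_eq_ball : unitDisk = ball (0 : ℂ) 1 := by
  ext z; simp [unitDisk]

theorem exists_eq_pow_mul_of_iteratedDeriv {f : ℂ → ℂ} {U : Set ℂ} (hU : IsOpen U)
    (h0 : (0 : ℂ) ∈ U) (hf : DifferentiableOn ℂ f U) {p : ℕ}
    (hcoef : ∀ k < p, iteratedDeriv k f 0 = 0) (hcoefp : iteratedDeriv p f 0 = p.factorial) :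
    ∃ g : ℂ → ℂ, DifferentiableOn ℂ g U ∧ g 0 = 1 ∧ ∀ z, f z = z ^ p * g z := by
  obtain ⟨F, hF0, hF⟩ := (hf.analyticAt (hU.mem_nhds h0)).exists_eq_sum_add_pow_mul (p + 1)
  have hfg : ∀ z, f z = z ^ p * (1 + z * F z) := fun z => by
    rw [hF z, Finset.sum_range_succ, Finset.sum_eq_zero fun k hk => by
      simp [hcoef k (Finset.mem_range.1 hk)], hcoefp, smul_eq_mul, smul_eq_mul,
      div_mul_cancel₀ _ (Nat.cast_ne_zero.2 p.factorial_ne_zero)]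
    ring
  refine ⟨fun z => 1 + z * F z, fun z hz => ?_, by simp, hfg⟩
  rcases eq_or_ne z 0 with rfl | hz0
  · exact (analyticAt_const.add (analyticAt_id.mul hF0)).differentiableAt.differentiableWithinAt
  · have hquot : (fun w => f w / w ^ p) =ᶠ[𝓝 z] fun w => 1 + w * F w := by
      filter_upwards [isOpen_ne.mem_nhds hz0] with w hw
      rw [hfg, mul_div_cancel_left₀ _ (pow_ne_zero p hw)]
    exact (((hf.differentiableAt (hU.mem_nhds hz)).div (differentiableAt_pow p)
      (pow_ne_zero p hz0)).congr_of_eventuallyEq hquot.symm).differentiableWithinAt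

theorem mul_deriv_eq_pow_mul {f g : ℂ → ℂ} (p : ℕ) (hfg : ∀ z, f z = z ^ p * g z) {z : ℂ}
    (hg : DifferentiableAt ℂ g z) :
    z * deriv f z = z ^ p * (p * g z + z * deriv g z) := by
  rw [show f = fun z => z ^ p * g z from funext hfg,
    ((hasDerivAt_pow p z).fun_mul hg.hasDerivAt).deriv]
  cases p with
  | zero => simp
  | succ m => simp only [Nat.add_sub_cancel]; push_cast; ring

theorem mul_one_add_mul_deriv_deriv_div {f ψ : ℂ → ℂ} {a z : ℂ} (hz : z ≠ 0)
    (hf : DifferentiableAt ℂ f z) (hf' : DifferentiableAt ℂ (deriv f) z) (hfz : deriv f z ≠ 0)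
    (hψ : ψ =ᶠ[𝓝 z] fun w => a * f w / (w * deriv f w)) :
    ψ z * (1 + z * deriv (deriv f) z / deriv f z) = a - z * deriv ψ z := by
  have hderiv : HasDerivAt (fun w => a * f w / (w * deriv f w))
      ((a * deriv f z * (z * deriv f z) - a * f z * (deriv f z + z * deriv (deriv f) z))
        / (z * deriv f z) ^ 2) z := by
    simpa using (hf.hasDerivAt.const_mul a).fun_div
      ((hasDerivAt_id z).fun_mul hf'.hasDerivAt) (mul_ne_zero hz hfz)
  rw [hψ.self_of_nhds, (hderiv.congr_of_eventuallyEq hψ).deriv]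
  field_simp
  ring

theorem mul_deriv_im_eq_zero_and_re_nonpos_of_isMinOn {ψ : ℂ → ℂ} {z₀ : ℂ}
    (hψ : DifferentiableAt ℂ ψ z₀)
    (hmin : IsMinOn (fun z => (ψ z).re) (closedBall 0 ‖z₀‖) z₀) :
    (z₀ * deriv ψ z₀).im = 0 ∧ (z₀ * deriv ψ z₀).re ≤ 0 := by
  set c := z₀ * deriv ψ z₀
  set H := {ζ : ℂ | ζ.re ≤ 0}
  have hF : HasDerivAt (fun ζ => ψ (z₀ * exp ζ)) c 0 := by
    have hψ' : HasDerivAt ψ (deriv ψ z₀) (z₀ * exp 0) := by simpa using hψ.hasDerivAt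
    exact (hψ'.comp 0 ((hasDerivAt_exp 0).const_mul z₀)).congr_deriv (by simp [c, mul_comm])
  have hFmin : IsLocalMinOn (fun ζ => (ψ (z₀ * exp ζ)).re) H 0 := by
    refine IsMinOn.localize fun ζ hζ => ?_
    have hmem : z₀ * exp ζ ∈ closedBall 0 ‖z₀‖ := by
      simpa [norm_exp] using mul_le_of_le_one_right (norm_nonneg z₀) (Real.exp_le_one_iff.2 hζ)
    simpa using hmin hmem
  have hnonneg : ∀ y ∈ H, 0 ≤ (y * c).re := fun y hy => by
    have htan : y ∈ posTangentConeAt H 0 := mem_posTangentConeAt_of_segment_subset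
      ((convex_halfSpace_re_le 0).segment_subset (by simp) (by rw [zero_add]; exact hy))
    simpa using hFmin.hasFDerivWithinAt_nonneg
      (reCLM.hasFDerivAt.comp 0 (hF.hasFDerivAt.restrictScalars ℝ)).hasFDerivWithinAt htan
  have h1 := hnonneg (-1) (by simp [H])
  have h2 := hnonneg I (by simp [H])
  have h3 := hnonneg (-I) (by simp [H])
  simp only [neg_mul, one_mul, neg_re, I_mul_re] at h1 h2 h3
  constructor <;> linarith

theorem exists_re_eq_zero_and_mul_deriv_nonpos {ψ : ℂ → ℂ} {R : ℝ}
    (hψ : DifferentiableOn ℂ ψ (ball 0 R)) (hψ0 : 0 < (ψ 0).re) {z₁ : ℂ} (hz₁ : z₁ ∈ ball 0 R)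
    (hle : (ψ z₁).re ≤ 0) :
    ∃ z₀ ∈ ball (0 : ℂ) R, (ψ z₀).re = 0 ∧ (z₀ * deriv ψ z₀).im = 0 ∧
      (z₀ * deriv ψ z₀).re ≤ 0 := by
  have hsub : ∀ {r}, r ≤ ‖z₁‖ → closedBall (0 : ℂ) r ⊆ ball 0 R := fun hr =>
    closedBall_subset_ball (lt_of_le_of_lt hr (mem_ball_zero_iff.1 hz₁))
  have hcont : ∀ {r}, r ≤ ‖z₁‖ → ContinuousOn (fun z => (ψ z).re) (closedBall 0 r) :=
    fun hr => continuous_re.comp_continuousOn (hψ.continuousOn.mono (hsub hr))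
  have hK : IsClosed (closedBall (0 : ℂ) ‖z₁‖ ∩ (fun z => (ψ z).re) ⁻¹' Iic 0) :=
    (hcont le_rfl).preimage_isClosed_of_isClosed isClosed_closedBall isClosed_Iic
  obtain ⟨z₀, ⟨hz₀, hz₀le : (ψ z₀).re ≤ 0⟩, hmin⟩ :=
    ((isCompact_closedBall 0 ‖z₁‖).of_isClosed_subset hK inter_subset_left).exists_isMinOn
      ⟨z₁, mem_closedBall_zero_iff.2 le_rfl, hle⟩ continuous_norm.continuousOn
  have hz₀r : ‖z₀‖ ≤ ‖z₁‖ := mem_closedBall_zero_iff.1 hz₀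
  have hpos : ∀ y ∈ ball (0 : ℂ) ‖z₀‖, 0 ≤ (ψ y).re := fun y hy => by
    by_contra! hy'
    have := hmin ⟨mem_closedBall_zero_iff.2 ((mem_ball_zero_iff.1 hy).le.trans hz₀r), hy'.le⟩
    exact (mem_ball_zero_iff.1 hy).not_ge this
  have hz₀ne : ‖z₀‖ ≠ 0 := by
    rintro h
    rw [norm_eq_zero.1 h] at hz₀le
    linarith
  have hT : IsClosed (closedBall (0 : ℂ) ‖z₀‖ ∩ (fun z => (ψ z).re) ⁻¹' Ici 0) :=
    (hcont hz₀r).preimage_isClosed_of_isClosed isClosed_closedBall isClosed_Ici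
  have hnonneg : closedBall (0 : ℂ) ‖z₀‖ ⊆ (fun z => (ψ z).re) ⁻¹' Ici 0 := by
    rw [← closure_ball (0 : ℂ) hz₀ne]
    exact (hT.closure_subset_iff.2 fun x hx => ⟨ball_subset_closedBall hx, hpos x hx⟩).trans
      inter_subset_right
  have hre : (ψ z₀).re = 0 := le_antisymm hz₀le (hnonneg (by simp))
  refine ⟨z₀, hsub le_rfl hz₀, hre, mul_deriv_im_eq_zero_and_re_nonpos_of_isMinOn
    (hψ.differentiableAt (isOpen_ball.mem_nhds (hsub le_rfl hz₀))) fun y hy => ?_⟩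
  simpa [hre] using hnonneg hy

theorem re_pos_of_mul_eq_sub_mul_deriv {ψ w : ℂ → ℂ} {R a : ℝ} (ha : 0 < a)
    (hψ : DifferentiableOn ℂ ψ (ball 0 R)) (hψ0 : 0 < (ψ 0).re)
    (hw : ∀ z ∈ ball (0 : ℂ) R, z ≠ 0 → 0 < (w z).re)
    (hid : ∀ z ∈ ball (0 : ℂ) R, z ≠ 0 → ψ z * w z = a - z * deriv ψ z) :
    ∀ z ∈ ball (0 : ℂ) R, 0 < (ψ z).re := by
  intro z₁ hz₁
  by_contra! hle
  obtain ⟨z₀, hz₀, hre, him, hneg⟩ := exists_re_eq_zero_and_mul_deriv_nonpos hψ hψ0 hz₁ hle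
  have hz₀ne : z₀ ≠ 0 := by
    rintro rfl
    linarith
  have hw₀ := hw z₀ hz₀ hz₀ne
  have hid₀ := hid z₀ hz₀ hz₀ne
  generalize z₀ * deriv ψ z₀ = c at him hneg hid₀
  have hid_im := congrArg im hid₀
  have hid_re := congrArg re hid₀
  simp only [mul_im, mul_re, sub_im, sub_re, ofReal_im, ofReal_re, hre, him, zero_mul,
    zero_add, sub_zero] at hid_im hid_re
  have hψim : (ψ z₀).im = 0 := (mul_eq_zero.1 hid_im).resolve_right hw₀.ne'
  rw [hψim, zero_mul, sub_zero] at hid_re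
  linarith

theorem re_pos_of_eq_pow_mul {p : ℕ} (hp : 0 < p) {f g : ℂ → ℂ}
    (hf : DifferentiableOn ℂ f (ball 0 1)) (hg : DifferentiableOn ℂ g (ball 0 1)) (hg0 : g 0 = 1)
    (hfg : ∀ z, f z = z ^ p * g z) (hne : ∀ z ∈ ball (0 : ℂ) 1, z ≠ 0 → deriv f z ≠ 0)
    (hre : ∀ z ∈ ball (0 : ℂ) 1, 0 < (1 + z * deriv (deriv f) z / deriv f z).re) :
    ∀ z ∈ ball (0 : ℂ) 1, 0 < (p * g z / (p * g z + z * deriv g z)).re := by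
  have hp' : (p : ℂ) ≠ 0 := Nat.cast_ne_zero.2 hp.ne'
  have hmul : ∀ z ∈ ball (0 : ℂ) 1, z * deriv f z = z ^ p * (p * g z + z * deriv g z) :=
    fun z hz => mul_deriv_eq_pow_mul p hfg (hg.differentiableAt (isOpen_ball.mem_nhds hz))
  have hD : ∀ z ∈ ball (0 : ℂ) 1, p * g z + z * deriv g z ≠ 0 := fun z hz => by
    rcases eq_or_ne z 0 with rfl | hz0
    · simpa [hg0] using hp'
    · exact right_ne_zero_of_mul (hmul z hz ▸ mul_ne_zero hz0 (hne z hz hz0))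
  set ψ := fun z => p * g z / (p * g z + z * deriv g z)
  have hψ : DifferentiableOn ℂ ψ (ball 0 1) :=
    ((hg.const_mul _).div ((hg.const_mul _).add
      (differentiableOn_id.mul (hg.deriv isOpen_ball))) hD)
  refine re_pos_of_mul_eq_sub_mul_deriv (Nat.cast_pos.2 hp) hψ (by simp [hg0, hp'])
    (fun z hz _ => hre z hz) fun z hz hz0 => ?_
  have hψf : ψ =ᶠ[𝓝 z] fun w => p * f w / (w * deriv f w) := by
    filter_upwards [(isOpen_ball.inter isOpen_ne).mem_nhds ⟨hz, hz0⟩] with w ⟨hw, hw0⟩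
    rw [hmul w hw, hfg, mul_left_comm, mul_div_mul_left _ _ (pow_ne_zero p hw0)]
  have hfd := hf.differentiableAt (isOpen_ball.mem_nhds hz)
  have hf'd := (hf.deriv isOpen_ball).differentiableAt (isOpen_ball.mem_nhds hz)
  simpa using mul_one_add_mul_deriv_deriv_div hz0 hfd hf'd (hne z hz hz0) hψf

theorem exists_hasDerivAt_logDeriv_exp_eq {g : ℂ → ℂ} {c : ℂ} {r : ℝ}
    (hg : DifferentiableOn ℂ g (ball c r)) (hg0 : ∀ z ∈ ball c r, g z ≠ 0) :
    ∃ L : ℂ → ℂ, L c = log (g c) ∧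
      ∀ z ∈ ball c r, HasDerivAt L (logDeriv g z) z ∧ exp (L z) = g z := by
  obtain ⟨L, hLc, hL⟩ :=
    ((hg.deriv isOpen_ball).div hg hg0).isExactOn_ball.with_val_at c (log (g c))
  refine ⟨L, hLc, fun z hz => ⟨hL z hz, ?_⟩⟩
  have hderiv : ∀ z ∈ ball c r, HasDerivAt (fun z => g z * exp (-L z)) 0 z := fun z hz => by
    have hgd := (hg.differentiableAt (isOpen_ball.mem_nhds hz)).hasDerivAt
    refine (hgd.fun_mul (hL z hz).neg.cexp).congr_deriv ?_
    rw [Pi.div_apply]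
    field_simp [hg0 z hz]
    ring
  have hconst := isOpen_ball.is_const_of_deriv_eq_zero (convex_ball c r).isPreconnected
    (fun z hz => (hderiv z hz).differentiableAt.differentiableWithinAt)
    (fun z hz => (hderiv z hz).deriv) hz (mem_ball_self (pos_of_mem_ball hz))
  have hgc := hg0 c (mem_ball_self (pos_of_mem_ball hz))
  rw [hLc, exp_neg, exp_neg, exp_log hgc, mul_inv_cancel₀ hgc, mul_inv_eq_one₀ (exp_ne_zero _)]
    at hconst
  exact hconst.symm

theorem Convex.injOn_of_hasDerivAt_of_re_pos {U : Set ℂ} (hU : Convex ℝ U) {F F' : ℂ → ℂ}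
    (hF : ∀ z ∈ U, HasDerivAt F (F' z) z) (hpos : ∀ z ∈ U, 0 < (F' z).re) : InjOn F U := by
  intro v hv u hu huv
  by_contra! hne
  have hsub : u - v ≠ 0 := sub_ne_zero.2 hne.symm
  have hmem : ∀ t ∈ Icc (0 : ℝ) 1, v + (t : ℂ) * (u - v) ∈ U := fun t ht => by
    simpa [Complex.real_smul] using hU.add_smul_sub_mem hv hu ht
  have hφ : ∀ t ∈ Icc (0 : ℝ) 1, HasDerivAt (fun t : ℝ => (F (v + t * (u - v)) / (u - v)).re)
      (F' (v + t * (u - v))).re t := fun t ht => by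
    have hline : HasDerivAt (fun s : ℂ => v + s * (u - v)) (u - v) t := by
      simpa using ((hasDerivAt_id (t : ℂ)).mul_const (u - v)).const_add v
    have := (((hF _ (hmem t ht)).comp (t : ℂ) hline).comp_ofReal.div_const (u - v))
    rw [mul_div_cancel_right₀ _ hsub] at this
    exact reCLM.hasFDerivAt.comp_hasDerivAt t this
  obtain ⟨t, ht, hslope⟩ := exists_hasDerivAt_eq_slope _ _ zero_lt_one
    (fun t ht => (hφ t ht).continuousAt.continuousWithinAt)
    (fun t ht => hφ t (Ioo_subset_Icc_self ht))
  simp only [ofReal_one, ofReal_zero, one_mul, zero_mul, add_zero, add_sub_cancel, huv,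
    sub_self, zero_div] at hslope
  exact (hpos _ (hmem t (Ioo_subset_Icc_self ht))).ne' hslope

theorem injOn_mul_exp {M : ℂ → ℂ} (hM : DifferentiableOn ℂ M (ball 0 1))
    (hpos : ∀ z ∈ ball (0 : ℂ) 1, 0 < (1 + z * deriv M z).re) :
    InjOn (fun z => z * exp (M z)) (ball 0 1) := by
  set G := fun u => u + M (exp u)
  have hexp : ∀ u : ℂ, u.re < 0 → exp u ∈ ball (0 : ℂ) 1 := fun u hu => by
    simpa [norm_exp] using hu
  have hG : InjOn G {u | u.re < 0} := by
    refine (convex_halfSpace_re_lt 0).injOn_of_hasDerivAt_of_re_pos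
      (F' := fun u => 1 + exp u * deriv M (exp u)) (fun u hu => ?_) fun u hu => hpos _ (hexp u hu)
    have hMd := (hM.differentiableAt (isOpen_ball.mem_nhds (hexp u hu))).hasDerivAt
    exact ((hasDerivAt_id u).add (hMd.comp u (hasDerivAt_exp u))).congr_deriv (by ring)
  have hlog : ∀ z ∈ ball (0 : ℂ) 1, z ≠ 0 → (log z).re < 0 := fun z hz hz0 => by
    rw [log_re]
    exact Real.log_neg (norm_pos_iff.2 hz0) (mem_ball_zero_iff.1 hz)
  have hGlog : ∀ z, z ≠ 0 → exp (G (log z)) = z * exp (M z) := fun z hz0 => by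
    simp [G, exp_add, exp_log hz0]
  intro z₁ hz₁ z₂ hz₂ heq
  rcases eq_or_ne z₁ 0 with rfl | hz₁0
  · simpa [exp_ne_zero, eq_comm] using heq
  rcases eq_or_ne z₂ 0 with rfl | hz₂0
  · simpa [exp_ne_zero] using heq
  obtain ⟨n, hn⟩ := exp_eq_exp_iff_exists_int.1
    ((hGlog z₁ hz₁0).trans (heq.trans (hGlog z₂ hz₂0).symm))
  have hshift : G (log z₂ + n * (2 * Real.pi * I)) = G (log z₂) + n * (2 * Real.pi * I) := by
    simp only [G, exp_add, exp_int_mul_two_pi_mul_I, mul_one]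
    ring
  have hlog_eq := hG (hlog z₁ hz₁ hz₁0) (show (log z₂ + n * (2 * Real.pi * I)).re < 0 by
    simpa using hlog z₂ hz₂ hz₂0) (hn.trans hshift.symm)
  rw [← exp_log hz₁0, ← exp_log hz₂0, hlog_eq, exp_add, exp_int_mul_two_pi_mul_I, mul_one]

theorem isStarlikeUnivalent_mul_exp {M : ℂ → ℂ} (hM : DifferentiableOn ℂ M (ball 0 1))
    (hM0 : M 0 = 0) (hpos : ∀ z ∈ ball (0 : ℂ) 1, 0 < (1 + z * deriv M z).re) :
    IsStarlikeUnivalent fun z => z * exp (M z) := by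
  have hderiv : ∀ z ∈ ball (0 : ℂ) 1,
      HasDerivAt (fun z => z * exp (M z)) (exp (M z) * (1 + z * deriv M z)) z := fun z hz => by
    have hMd := (hM.differentiableAt (isOpen_ball.mem_nhds hz)).hasDerivAt
    exact ((hasDerivAt_id z).fun_mul hMd.cexp).congr_deriv (by simp only [one_mul, id_eq]; ring)
  rw [IsStarlikeUnivalent, unitDisk_eq_ball]
  refine ⟨?_, injOn_mul_exp hM hpos, by simp, ?_, ?_⟩
  · exact fun z hz => (hderiv z hz).differentiableAt.differentiableWithinAt
  · simp [(hderiv 0 (mem_ball_self one_pos)).deriv, hM0]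
  · intro z hz hz0
    rw [(hderiv z hz).deriv]
    field_simp [exp_ne_zero]
    exact hpos z hz

/-- if `f(z) = z^p + ⋯` is analytic on `D` with `f'(z) ≠ 0` for
`z ∈ D \ {0}` and `Re(1 + z f''(z)/f'(z)) > 0` on `D`, then `f = f0^p` for some
starlike univalent `f0`. -/
theorem pth_power_of_starlike (p : ℕ) (hp : 0 < p) (f : ℂ → ℂ)
    (hf : DifferentiableOn ℂ f unitDisk)
    (hcoef : ∀ k < p, iteratedDeriv k f 0 = 0)
    (hcoefp : iteratedDeriv p f 0 = (p.factorial : ℂ))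
    (hne : ∀ z ∈ unitDisk, z ≠ 0 → deriv f z ≠ 0)
    (hre : ∀ z ∈ unitDisk, 0 < (1 + z * deriv (deriv f) z / deriv f z).re) :
    ∃ f0 : ℂ → ℂ, IsStarlikeUnivalent f0 ∧ ∀ z ∈ unitDisk, f z = f0 z ^ p := by
  rw [unitDisk_eq_ball] at hf hne hre ⊢
  have hp' : (p : ℂ) ≠ 0 := Nat.cast_ne_zero.2 hp.ne'
  obtain ⟨g, hg, hg0, hfg⟩ :=
    exists_eq_pow_mul_of_iteratedDeriv isOpen_ball (mem_ball_self one_pos) hf hcoef hcoefp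
  have hψ := re_pos_of_eq_pow_mul hp hf hg hg0 hfg hne hre
  have hg_ne : ∀ z ∈ ball (0 : ℂ) 1, g z ≠ 0 := fun z hz hgz => by simpa [hgz] using hψ z hz
  obtain ⟨L, hL0, hL⟩ := exists_hasDerivAt_logDeriv_exp_eq hg hg_ne
  refine ⟨fun z => z * exp (L z / p), isStarlikeUnivalent_mul_exp ?_ (by simp [hL0, hg0]) ?_,
    fun z hz => ?_⟩
  · exact fun z hz => ((hL z hz).1.differentiableAt.div_const _).differentiableWithinAt
  · intro z hz
    have hinv : 1 + z * deriv (fun z => L z / p) z = (p * g z / (p * g z + z * deriv g z))⁻¹ := by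
      rw [((hL z hz).1.div_const _).deriv, logDeriv_apply]
      field_simp [hg_ne z hz]
    rw [hinv, inv_re]
    exact div_pos (hψ z hz) (normSq_pos.2 fun h => (hψ z hz).ne' (by simp [h]))
  · rw [hfg, mul_pow, ← exp_nat_mul, mul_div_cancel₀ _ hp', (hL z hz).2]
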